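/- Let p ∈ (1,∞) and p' = p/(p−1). For every absolutely continuous function f : (0,∞) → [0,∞) with lim_{s→0} f(s) = 0 and lim_{s→∞} f(s) = 0, one has ( ∫_0^∞ |f'(s)|^p s^{p−1} ds )^{1/p} · ( ∫_0^∞ |f(s)|^p / s ds )^{1/p'} ≥ p^{−1} ‖f‖_{L^∞(0,∞)}^p. -/

import Mathlib

/-
Let `ν = |f'(t)| dt` on `(0, ∞)`. Since `f → 0` at `0⁺`, for every level `s > 0` and every `x > 0`
the last point `c < x` with `|f c| ≤ s` gives `|f x| - s ≤ ∫_c^x |f'| ≤ ν {|f| > s}`. Integrating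
this against `d(s^(p-1))` and using the layer-cake formula yields
`|f x|^p / p ≤ ∫ |f|^(p-1) dν = ∫ |f'| |f|^(p-1) dt`, which replaces the chain rule
`(|f|^p)' = p |f|^(p-1) f'` for absolutely continuous `f`. Hölder's inequality with the weights
`t^(±(p-1)/p)` bounds the right-hand side by the product of the two integrals.
-/

open MeasureTheory
open scoped ENNReal

noncomputable section

/-- `f` is (locally) absolutely continuous on `(0,∞)` with derivative `f'`:
the fundamental theorem of calculus holds on every compact subinterval. -/
def ACDerivOn (f f' : ℝ → ℝ) : Prop :=
  ∀ a b : ℝ, 0 < a → a ≤ b →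
    IntegrableOn f' (Set.Icc a b) ∧ f b - f a = ∫ t in a..b, f' t

open Set Filter Topology

theorem ContinuousOn.exists_last_le {g : ℝ → ℝ} {a b s : ℝ} (hab : a ≤ b)
    (hg : ContinuousOn g (Icc a b)) (ha : g a ≤ s) :
    ∃ c ∈ Icc a b, g c ≤ s ∧ ∀ t ∈ Ioc c b, s < g t := by
  set S := {t ∈ Icc a b | g t ≤ s}
  have hS : IsClosed S := hg.preimage_isClosed_of_isClosed isClosed_Icc isClosed_Iic
  have hbdd : BddAbove S := ⟨b, fun t ht => ht.1.2⟩
  obtain ⟨hc, hgc⟩ : sSup S ∈ S := hS.csSup_mem ⟨a, ⟨le_rfl, hab⟩, ha⟩ hbdd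
  refine ⟨sSup S, hc, hgc, fun t ht => ?_⟩
  by_contra! hgt
  exact (le_csSup hbdd ⟨⟨hc.1.trans ht.1.le, ht.2⟩, hgt⟩).not_gt ht.1

theorem integral_mul_sub_mul_rpow {c q : ℝ} (hc : 0 ≤ c) (hq : 0 < q) :
    ∫ s in (0)..c, q * ((c - s) * s ^ (q - 1)) = c ^ (q + 1) / (q + 1) := by
  have hsplit : EqOn (fun s => q * ((c - s) * s ^ (q - 1)))
      (fun s => q * c * s ^ (q - 1) - q * s ^ (q - 1 + 1)) (uIcc 0 c) := by
    intro s hs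
    rw [uIcc_of_le hc] at hs
    simp only [Real.rpow_add_one' hs.1 (by linarith : q - 1 + 1 ≠ 0)]
    ring
  have hq1 : -1 < q - 1 := by linarith
  rw [intervalIntegral.integral_congr hsplit, intervalIntegral.integral_sub
      ((intervalIntegral.intervalIntegrable_rpow' hq1).const_mul _)
      ((intervalIntegral.intervalIntegrable_rpow' (by linarith)).const_mul _),
    intervalIntegral.integral_const_mul, intervalIntegral.integral_const_mul,
    integral_rpow (Or.inl hq1), integral_rpow (Or.inl (by linarith)), sub_add_cancel,
    Real.zero_rpow hq.ne', Real.zero_rpow (by linarith), Real.rpow_add_one' hc (by linarith)]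
  field_simp
  ring

theorem ofReal_rpow_div_le_lintegral {m : ℝ → ℝ≥0∞} {c q : ℝ} (hc : 0 ≤ c) (hq : 0 < q)
    (hm : ∀ s ∈ Ioc 0 c, ENNReal.ofReal (c - s) ≤ m s) :
    ENNReal.ofReal (c ^ (q + 1) / (q + 1)) ≤
      ENNReal.ofReal q * ∫⁻ s in Ioi 0, m s * ENNReal.ofReal (s ^ (q - 1)) := by
  have hint : IntervalIntegrable (fun s => q * ((c - s) * s ^ (q - 1))) volume 0 c :=
    ((intervalIntegral.intervalIntegrable_rpow' (by linarith)).continuousOn_mul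
      (continuousOn_const.sub continuousOn_id)).const_mul q
  have hnonneg : 0 ≤ᵐ[volume.restrict (Ioc 0 c)] fun s => q * ((c - s) * s ^ (q - 1)) := by
    filter_upwards [ae_restrict_mem measurableSet_Ioc] with s hs
    exact mul_nonneg hq.le (mul_nonneg (sub_nonneg.2 hs.2) (Real.rpow_nonneg hs.1.le _))
  rw [← integral_mul_sub_mul_rpow hc hq, intervalIntegral.integral_of_le hc,
    ofReal_integral_eq_lintegral_ofReal ((intervalIntegrable_iff_integrableOn_Ioc_of_le hc).1 hint)
      hnonneg, ← lintegral_const_mul' _ _ ENNReal.ofReal_ne_top]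
  calc ∫⁻ s in Ioc 0 c, ENNReal.ofReal (q * ((c - s) * s ^ (q - 1)))
      ≤ ∫⁻ s in Ioc 0 c, ENNReal.ofReal q * (m s * ENNReal.ofReal (s ^ (q - 1))) := by
        refine setLIntegral_mono' measurableSet_Ioc fun s hs => ?_
        rw [ENNReal.ofReal_mul hq.le, ENNReal.ofReal_mul (sub_nonneg.2 hs.2)]
        gcongr
        exact hm s hs
    _ ≤ ∫⁻ s in Ioi 0, ENNReal.ofReal q * (m s * ENNReal.ofReal (s ^ (q - 1))) :=
        lintegral_mono_set Ioc_subset_Ioi_self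

theorem lintegral_enorm_mul_rpow_le {p q : ℝ} (hpq : p.HolderConjugate q) {g h : ℝ → ℝ}
    (hg : AEMeasurable g (volume.restrict (Ioi 0)))
    (hh : AEMeasurable h (volume.restrict (Ioi 0))) :
    ∫⁻ t in Ioi 0, ‖g t‖ₑ * ENNReal.ofReal (|h t| ^ (p - 1)) ≤
      (∫⁻ t in Ioi 0, ENNReal.ofReal (|g t| ^ p * t ^ (p - 1))) ^ (1 / p) *
        (∫⁻ t in Ioi 0, ENNReal.ofReal (|h t| ^ p / t)) ^ (1 / q) := by
  set φ : ℝ → ℝ≥0∞ := fun t => ENNReal.ofReal (|g t| * t ^ q⁻¹)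
  set ψ : ℝ → ℝ≥0∞ := fun t => ENNReal.ofReal (|h t| ^ (p - 1) * t ^ (-q⁻¹))
  have hφ : AEMeasurable φ (volume.restrict (Ioi 0)) := by fun_prop
  have hψ : AEMeasurable ψ (volume.restrict (Ioi 0)) := by fun_prop
  have hmul : ∀ t ∈ Ioi (0 : ℝ), ‖g t‖ₑ * ENNReal.ofReal (|h t| ^ (p - 1)) = (φ * ψ) t := by
    intro t (ht : 0 < t)
    have hw : t ^ q⁻¹ * t ^ (-q⁻¹) = 1 := by
      rw [Real.rpow_neg ht.le, mul_inv_cancel₀ (by positivity)]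
    rw [Pi.mul_apply, ← ENNReal.ofReal_mul (by positivity), Real.enorm_eq_ofReal_abs,
      ← ENNReal.ofReal_mul (abs_nonneg _)]
    congr 1
    linear_combination (-(|g t| * |h t| ^ (p - 1))) * hw
  have hφp : ∀ t ∈ Ioi (0 : ℝ), φ t ^ p = ENNReal.ofReal (|g t| ^ p * t ^ (p - 1)) := by
    intro t (ht : 0 < t)
    rw [ENNReal.ofReal_rpow_of_nonneg (by positivity) hpq.nonneg,
      Real.mul_rpow (abs_nonneg _) (by positivity), ← Real.rpow_mul ht.le, inv_mul_eq_div,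
      hpq.div_conj_eq_sub_one]
  have hψq : ∀ t ∈ Ioi (0 : ℝ), ψ t ^ q = ENNReal.ofReal (|h t| ^ p / t) := by
    intro t (ht : 0 < t)
    rw [ENNReal.ofReal_rpow_of_nonneg (by positivity) hpq.symm.nonneg,
      Real.mul_rpow (by positivity) (by positivity), ← Real.rpow_mul (abs_nonneg _),
      ← Real.rpow_mul ht.le, hpq.sub_one_mul_conj, neg_mul, inv_mul_cancel₀ hpq.symm.ne_zero,
      Real.rpow_neg_one, div_eq_mul_inv]
  calc ∫⁻ t in Ioi 0, ‖g t‖ₑ * ENNReal.ofReal (|h t| ^ (p - 1))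
      = ∫⁻ t in Ioi 0, (φ * ψ) t := setLIntegral_congr_fun measurableSet_Ioi hmul
    _ ≤ (∫⁻ t in Ioi 0, φ t ^ p) ^ (1 / p) * (∫⁻ t in Ioi 0, ψ t ^ q) ^ (1 / q) :=
        ENNReal.lintegral_mul_le_Lp_mul_Lq _ hpq hφ hψ
    _ = _ := by
        rw [setLIntegral_congr_fun measurableSet_Ioi hφp,
          setLIntegral_congr_fun measurableSet_Ioi hψq]

theorem eLpNorm_top_rpow_le_of_ae {α ε : Type*} [MeasurableSpace α] [ENorm ε] {μ : Measure α}
    {f : α → ε} {p : ℝ} (hp : 0 < p) {C : ℝ≥0∞} (hfC : ∀ᵐ x ∂μ, ‖f x‖ₑ ^ p ≤ C) :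
    eLpNorm f ⊤ μ ^ p ≤ C := by
  rw [← ENNReal.le_rpow_inv_iff hp, eLpNorm_exponent_top]
  exact eLpNormEssSup_le_of_ae_enorm_bound (hfC.mono fun x hx => (ENNReal.le_rpow_inv_iff hp).2 hx)

abbrev variationMeasure (f' : ℝ → ℝ) : Measure ℝ := (volume.restrict (Ioi 0)).withDensity (‖f' ·‖ₑ)

namespace ACDerivOn

variable {f f' : ℝ → ℝ}

theorem sub_eq_integral_Ioc (hf : ACDerivOn f f') {a b : ℝ} (ha : 0 < a) (hab : a ≤ b) :
    f b - f a = ∫ t in Ioc a b, f' t := by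
  rw [(hf a b ha hab).2, intervalIntegral.integral_of_le hab]

theorem locallyIntegrableOn (hf : ACDerivOn f f') : LocallyIntegrableOn f' (Ioi 0) := by
  intro x (hx : 0 < x)
  exact ⟨Icc (x / 2) (x + 1),
    mem_nhdsWithin_of_mem_nhds (Icc_mem_nhds (half_lt_self hx) (lt_add_one x)),
    (hf _ _ (half_pos hx) (by linarith [half_lt_self hx])).1⟩

theorem continuousOn (hf : ACDerivOn f f') : ContinuousOn f (Ioi 0) := by
  intro x (hx : 0 < x)
  have ha : 0 < x / 2 := half_pos hx
  have hprim : ContinuousOn (fun y => f (x / 2) + ∫ t in Ioc (x / 2) y, f' t)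
      (Icc (x / 2) (x + 1)) :=
    continuousOn_const.add (intervalIntegral.continuousOn_primitive
      (hf _ _ ha (by linarith [half_lt_self hx])).1)
  have hcont : ContinuousOn f (Icc (x / 2) (x + 1)) := hprim.congr fun y hy => by
    dsimp only
    rw [← hf.sub_eq_integral_Ioc ha hy.1, add_sub_cancel]
  exact (hcont.continuousAt (Icc_mem_nhds (half_lt_self hx) (lt_add_one x))).continuousWithinAt

theorem enorm_sub_le_lintegral (hf : ACDerivOn f f') {a b : ℝ} (ha : 0 < a) (hab : a ≤ b) :
    ‖f b - f a‖ₑ ≤ ∫⁻ t in Ioc a b, ‖f' t‖ₑ := by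
  rw [hf.sub_eq_integral_Ioc ha hab]
  exact enorm_integral_le_lintegral_enorm _

theorem ofReal_abs_sub_le_variationMeasure (hf : ACDerivOn f f')
    (h0 : Tendsto f (𝓝[>] 0) (𝓝 0)) {x s : ℝ} (hx : 0 < x) (hs : 0 < s) :
    ENNReal.ofReal (|f x| - s) ≤ variationMeasure f' {t | s < |f t|} := by
  obtain ⟨t₀, hft₀, ht₀⟩ : ∃ t₀, |f t₀| < s ∧ t₀ ∈ Ioo 0 x := by
    have hlim : Tendsto (|f ·|) (𝓝[>] 0) (𝓝 0) := by simpa using h0.abs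
    exact ((hlim.eventually_lt_const hs).and (Ioo_mem_nhdsGT hx)).exists
  obtain ⟨c, hc, hfc, hgt⟩ := ContinuousOn.exists_last_le ht₀.2.le
    (hf.continuousOn.abs.mono fun t ht => ht₀.1.trans_le ht.1) hft₀.le
  have hc0 : 0 < c := ht₀.1.trans_le hc.1
  calc ENNReal.ofReal (|f x| - s)
      ≤ ‖f x - f c‖ₑ := by
        rw [Real.enorm_eq_ofReal_abs]
        exact ENNReal.ofReal_le_ofReal (by linarith [abs_sub_abs_le_abs_sub (f x) (f c)])
    _ ≤ ∫⁻ t in Ioc c x, ‖f' t‖ₑ := hf.enorm_sub_le_lintegral hc0 hc.2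
    _ = variationMeasure f' (Ioc c x) := by
        rw [withDensity_apply _ measurableSet_Ioc, Measure.restrict_restrict measurableSet_Ioc,
          inter_eq_left.2 (show Ioc c x ⊆ Ioi 0 from fun t ht => hc0.trans ht.1)]
    _ ≤ variationMeasure f' {t | s < |f t|} := measure_mono hgt

theorem ofReal_abs_rpow_le_lintegral (hf : ACDerivOn f f') (h0 : Tendsto f (𝓝[>] 0) (𝓝 0))
    {p : ℝ} (hp : 1 < p) {x : ℝ} (hx : 0 < x) :
    ENNReal.ofReal (|f x| ^ p) ≤
      ENNReal.ofReal p * ∫⁻ t in Ioi 0, ‖f' t‖ₑ * ENNReal.ofReal (|f t| ^ (p - 1)) := by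
  have hq : 0 < p - 1 := sub_pos.2 hp
  have hf'm : AEMeasurable (‖f' ·‖ₑ) (volume.restrict (Ioi 0)) :=
    hf.locallyIntegrableOn.aestronglyMeasurable.enorm
  have hfm : AEMeasurable (|f ·|) (volume.restrict (Ioi 0)) :=
    hf.continuousOn.abs.aemeasurable measurableSet_Ioi
  have hlayer := lintegral_rpow_eq_lintegral_meas_lt_mul (variationMeasure f')
    (ae_of_all _ fun t => abs_nonneg (f t))
    (hfm.mono_ac (withDensity_absolutelyContinuous _ _)) hq
  have hpow : AEMeasurable (fun t => ENNReal.ofReal (|f t| ^ (p - 1))) (volume.restrict (Ioi 0)) :=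
    ENNReal.measurable_ofReal.comp_aemeasurable (hfm.pow_const _)
  rw [lintegral_withDensity_eq_lintegral_mul₀ hf'm hpow] at hlayer
  have hpx : ENNReal.ofReal (|f x| ^ p) =
      ENNReal.ofReal p * ENNReal.ofReal (|f x| ^ (p - 1 + 1) / (p - 1 + 1)) := by
    rw [sub_add_cancel, ← ENNReal.ofReal_mul (by linarith), mul_div_cancel₀ _ (by linarith)]
  rw [hpx]
  simp only [Pi.mul_apply] at hlayer
  rw [hlayer]
  gcongr
  exact ofReal_rpow_div_le_lintegral (abs_nonneg _) hq fun s hs =>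
    hf.ofReal_abs_sub_le_variationMeasure h0 hx hs.1

end ACDerivOn

theorem stmt19_general (p p' : ℝ) (hp : 1 < p) (hp' : p' = p / (p - 1))
    (f f' : ℝ → ℝ) (hAC : ACDerivOn f f')
    (hlim0 : Filter.Tendsto f (nhdsWithin 0 (Set.Ioi 0)) (nhds 0)) :
    ENNReal.ofReal p⁻¹ * eLpNorm f ⊤ (volume.restrict (Set.Ioi 0)) ^ p ≤
      (∫⁻ s in Set.Ioi (0 : ℝ), ENNReal.ofReal (|f' s| ^ p * s ^ (p - 1))) ^ (1 / p) *
        (∫⁻ s in Set.Ioi (0 : ℝ), ENNReal.ofReal (|f s| ^ p / s)) ^ (1 / p') := by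
  have hpq : p.HolderConjugate p' := (Real.holderConjugate_iff_eq_conjExponent hp).2 hp'
  have hp0 : 0 < p := zero_lt_one.trans hp
  have hsup : eLpNorm f ⊤ (volume.restrict (Ioi 0)) ^ p ≤
      ENNReal.ofReal p * ∫⁻ t in Ioi 0, ‖f' t‖ₑ * ENNReal.ofReal (|f t| ^ (p - 1)) := by
    refine eLpNorm_top_rpow_le_of_ae hp0 ?_
    filter_upwards [ae_restrict_mem measurableSet_Ioi] with x hx
    rw [Real.enorm_eq_ofReal_abs, ENNReal.ofReal_rpow_of_nonneg (abs_nonneg _) hp0.le]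
    exact hAC.ofReal_abs_rpow_le_lintegral hlim0 hp hx
  calc ENNReal.ofReal p⁻¹ * eLpNorm f ⊤ (volume.restrict (Ioi 0)) ^ p
      ≤ ENNReal.ofReal p⁻¹ *
          (ENNReal.ofReal p * ∫⁻ t in Ioi 0, ‖f' t‖ₑ * ENNReal.ofReal (|f t| ^ (p - 1))) := by
        gcongr
    _ = ∫⁻ t in Ioi 0, ‖f' t‖ₑ * ENNReal.ofReal (|f t| ^ (p - 1)) := by
        rw [← mul_assoc, ← ENNReal.ofReal_mul (inv_nonneg.2 hp0.le), inv_mul_cancel₀ hp0.ne',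
          ENNReal.ofReal_one, one_mul]
    _ ≤ _ := lintegral_enorm_mul_rpow_le hpq
        hAC.locallyIntegrableOn.aestronglyMeasurable.aemeasurable
        (hAC.continuousOn.aemeasurable measurableSet_Ioi)

/-- For `1 < p < ∞` and `p' = p/(p−1)`: every absolutely continuous
`f : (0,∞) → [0,∞)` with `f(s) → 0` as `s → 0⁺` and as `s → ∞` satisfies
`(∫_0^∞ |f'|^p s^{p−1} ds)^{1/p} (∫_0^∞ |f|^p/s ds)^{1/p'} ≥ p^{−1} ‖f‖_{L^∞(0,∞)}^p`. -/
theorem stmt19 (p p' : ℝ) (hp : 1 < p) (hp' : p' = p / (p - 1))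
    (f f' : ℝ → ℝ) (hAC : ACDerivOn f f')
    (hnonneg : ∀ s ∈ Set.Ioi (0 : ℝ), 0 ≤ f s)
    (hlim0 : Filter.Tendsto f (nhdsWithin 0 (Set.Ioi 0)) (nhds 0))
    (hliminf : Filter.Tendsto f Filter.atTop (nhds 0)) :
    ENNReal.ofReal p⁻¹ * eLpNorm f ⊤ (volume.restrict (Set.Ioi 0)) ^ p ≤
      (∫⁻ s in Set.Ioi (0 : ℝ), ENNReal.ofReal (|f' s| ^ p * s ^ (p - 1))) ^ (1 / p) *
        (∫⁻ s in Set.Ioi (0 : ℝ), ENNReal.ofReal (|f s| ^ p / s)) ^ (1 / p') :=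
  stmt19_general p p' hp hp' f f' hAC hlim0
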